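/- Let p be an odd prime, K the p-th cyclotomic field \mathbb{Q}(\zeta_p), and \zeta \in K a primitive p-th root of unity. Then for every natural number n one has the identity (\zeta + \zeta^{-1})^n \cdot (\zeta - \zeta^{-1}) = \sum_{k=1}^{p-1} d_p(n,k) \cdot (\zeta^k - \zeta^{-k}) in K. -/

import Mathlib

/-- `binZ n j` is the binomial coefficient `n choose j` for `j : ℤ`, which is `0`
unless `0 ≤ j ≤ n`. -/
def binZ (n : ℕ) (j : ℤ) : ℤ := if 0 ≤ j then (n.choose j.toNat : ℤ) else 0

/-- `catC n j = C(n,j) = binom(n,j) - binom(n,j-1)`. -/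
def catC (n : ℕ) (j : ℤ) : ℤ := binZ n j - binZ n (j - 1)

/-- `dP p n k = d_p(n,k) = ∑_{s ∈ ℤ} C(n, (n+1-k)/2 + s p)` when `k ≡ n+1 (mod 2)`,
and `0` otherwise. -/
noncomputable def dP (p n k : ℕ) : ℤ :=
  if k % 2 = (n + 1) % 2 then ∑ᶠ s : ℤ, catC n (((n : ℤ) + 1 - k) / 2 + s * p) else 0

/-! Extend `k ↦ d_p(n, k)` to an odd, `2p`-periodic function on `ℤ`. Pascal's rule for
`C(n, j)` survives the periodization, giving `d_p(n+1, k) = d_p(n, k-1) + d_p(n, k+1)`.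
Since `ζ^(2p) = 1`, multiplying `∑_{k<2p} c_k ζ^k` with `2p`-periodic `c` by `ζ` or `ζ⁻¹`
shifts the coefficients, so induction on `n` gives
`(ζ + ζ⁻¹)^n (ζ - ζ⁻¹) = ∑_{k<2p} d_p(n, k) ζ^k`. Pairing `k` with `2p - k` and using
oddness folds this sum onto `1 ≤ k ≤ p - 1`. -/

open Finset

lemma binZ_eq_zero_of_neg {n : ℕ} {j : ℤ} (h : j < 0) : binZ n j = 0 := by
  simp [binZ, not_le.2 h]

lemma binZ_eq_zero_of_lt {n : ℕ} {j : ℤ} (h : (n : ℤ) < j) : binZ n j = 0 := by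
  rw [binZ, if_pos (by omega), Nat.choose_eq_zero_of_lt (by omega), Nat.cast_zero]

lemma binZ_succ (n : ℕ) (j : ℤ) : binZ (n + 1) j = binZ n j + binZ n (j - 1) := by
  rcases lt_trichotomy j 0 with h | rfl | h
  · simp [binZ_eq_zero_of_neg h, binZ_eq_zero_of_neg (show j - 1 < 0 by omega)]
  · simp [binZ]
  · obtain ⟨i, rfl⟩ : ∃ i : ℕ, j = i + 1 := ⟨j.toNat - 1, by omega⟩
    simp [binZ, Nat.choose_succ_succ', add_comm, show (0 : ℤ) ≤ i + 1 by omega]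

lemma binZ_symm (n : ℕ) (j : ℤ) : binZ n (n - j) = binZ n j := by
  rcases lt_or_ge j 0 with h | h
  · rw [binZ_eq_zero_of_neg h, binZ_eq_zero_of_lt (by omega)]
  rcases le_or_gt j n with h' | h'
  · obtain ⟨i, rfl⟩ : ∃ i : ℕ, j = i := ⟨j.toNat, by omega⟩
    rw [binZ, binZ, if_pos (by omega), if_pos h, show ((n : ℤ) - i).toNat = n - i by omega,
      Int.toNat_natCast, Nat.choose_symm (by omega)]
  · rw [binZ_eq_zero_of_lt h', binZ_eq_zero_of_neg (by omega)]

lemma catC_eq_zero_of_notMem_Icc {n : ℕ} {j : ℤ} (h : j ∉ Set.Icc 0 ((n : ℤ) + 1)) :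
    catC n j = 0 := by
  rw [Set.mem_Icc, not_and_or, not_le, not_le] at h
  rcases h with h | h
  · rw [catC, binZ_eq_zero_of_neg h, binZ_eq_zero_of_neg (by omega), sub_zero]
  · rw [catC, binZ_eq_zero_of_lt (by omega), binZ_eq_zero_of_lt (by omega), sub_zero]

lemma support_catC_finite (n : ℕ) : (Function.support (catC n)).Finite :=
  (Set.finite_Icc 0 ((n : ℤ) + 1)).subset fun _ hj ↦
    by_contra fun h ↦ hj (catC_eq_zero_of_notMem_Icc h)

lemma catC_succ (n : ℕ) (j : ℤ) : catC (n + 1) j = catC n j + catC n (j - 1) := by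
  simp only [catC, binZ_succ]
  ring

lemma catC_reflect (n : ℕ) (j : ℤ) : catC n (n + 1 - j) = -catC n j := by
  have h₁ := binZ_symm n (j - 1)
  have h₂ := binZ_symm n j
  rw [sub_sub_eq_add_sub] at h₁
  rw [catC, catC, h₁, show (n : ℤ) + 1 - j - 1 = n - j by ring, h₂]
  ring

noncomputable def periodize (p : ℕ) (f : ℤ → ℤ) (j : ℤ) : ℤ :=
  ∑ᶠ s : ℤ, f (j + s * p)

section periodize

variable {p : ℕ} {f g : ℤ → ℤ}

lemma periodize_periodic : Function.Periodic (periodize p f) p := fun j ↦ by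
  rw [periodize, periodize, ← finsum_comp_equiv (Equiv.subRight 1)]
  exact finsum_congr fun s ↦ by simp only [Equiv.subRight_apply]; ring_nf

lemma periodize_add (hp : p ≠ 0) (hf : (Function.support f).Finite)
    (hg : (Function.support g).Finite) (j : ℤ) :
    periodize p (f + g) j = periodize p f j + periodize p g j := by
  have hinj : Function.Injective fun s : ℤ ↦ j + s * p := fun s t h ↦ by
    simpa [hp] using h
  exact finsum_add_distrib (hf.preimage hinj.injOn) (hg.preimage hinj.injOn)

lemma periodize_reflect {c : ℤ} (hf : ∀ i, f (c - i) = -f i) (j : ℤ) :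
    periodize p f (c - j) = -periodize p f j := by
  rw [periodize, periodize, ← finsum_neg_distrib, ← finsum_comp_equiv (Equiv.neg ℤ)]
  exact finsum_congr fun s ↦ by
    rw [← hf]; simp only [Equiv.neg_apply]; ring_nf

lemma periodize_eq_self {j : ℤ} (hf : ∀ i, f i ≠ 0 → j ≤ i ∧ i < j + p) :
    periodize p f j = f j := by
  rw [periodize, finsum_eq_single _ 0 fun s hs ↦ ?_, zero_mul, add_zero]
  by_contra h
  have := hf _ h
  rcases lt_or_gt_of_ne hs with hs | hs <;> nlinarith

lemma periodize_catC_succ (hp : p ≠ 0) (n : ℕ) (j : ℤ) :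
    periodize p (catC (n + 1)) j = periodize p (catC n) j + periodize p (catC n) (j - 1) := by
  have hshift : (Function.support fun i ↦ catC n (i - 1)).Finite :=
    (support_catC_finite n).preimage sub_left_injective.injOn
  rw [show catC (n + 1) = catC n + fun i ↦ catC n (i - 1) from funext (catC_succ n),
    periodize_add hp (support_catC_finite n) hshift]
  exact congrArg _ (finsum_congr fun s ↦ by ring_nf)

end periodize

noncomputable def dPInt (p n : ℕ) (k : ℤ) : ℤ :=
  if k % 2 = (n + 1) % 2 then periodize p (catC n) ((n + 1 - k) / 2) else 0

lemma dP_eq_dPInt (p n k : ℕ) : dP p n k = dPInt p n k := by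
  simp only [dP, dPInt, periodize]
  congr 1
  exact propext (by omega)

section dPInt

variable {p : ℕ}

lemma dPInt_periodic (n : ℕ) : Function.Periodic (dPInt p n) (2 * p) := fun k ↦ by
  have hpar : (k + 2 * p) % 2 = k % 2 := by omega
  have hj : ((n : ℤ) + 1 - (k + 2 * p)) / 2 = (n + 1 - k) / 2 - p := by omega
  rw [dPInt, dPInt, hpar, hj, periodize_periodic.sub_eq]

lemma dPInt_odd (n : ℕ) : Function.Odd (dPInt p n) := fun k ↦ by
  by_cases h : k % 2 = (n + 1) % 2
  · have hj : ((n : ℤ) + 1 - -k) / 2 = n + 1 - (n + 1 - k) / 2 := by omega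
    rw [dPInt, dPInt, if_pos (by omega), if_pos h, hj, periodize_reflect (catC_reflect n)]
  · rw [dPInt, dPInt, if_neg (by omega), if_neg h, neg_zero]

lemma dPInt_succ (hp : p ≠ 0) (n : ℕ) (k : ℤ) :
    dPInt p (n + 1) k = dPInt p n (k - 1) + dPInt p n (k + 1) := by
  simp only [dPInt, Nat.cast_succ]
  by_cases h : k % 2 = (n + 1 + 1) % 2
  · have h₁ : ((n : ℤ) + 1 - (k - 1)) / 2 = (n + 1 + 1 - k) / 2 := by omega
    have h₂ : ((n : ℤ) + 1 - (k + 1)) / 2 = (n + 1 + 1 - k) / 2 - 1 := by omega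
    rw [if_pos h, if_pos (by omega), if_pos (by omega), h₁, h₂, periodize_catC_succ hp]
  · rw [if_neg h, if_neg (by omega), if_neg (by omega), add_zero]

lemma dPInt_zero_left {k : ℤ} (hk₁ : 1 ≤ k) (hk₂ : k < p) :
    dPInt p 0 k = if k = 1 then 1 else 0 := by
  by_cases h : k % 2 = 1
  · rw [dPInt, if_pos (by simpa using h), periodize_eq_self fun i hi ↦ ?_]
    · split_ifs with hk
      · simp [hk, catC, binZ]
      · exact catC_eq_zero_of_notMem_Icc (by simp only [Set.mem_Icc]; omega)
    · by_contra hout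
      exact hi (catC_eq_zero_of_notMem_Icc (by simp only [Set.mem_Icc]; omega))
  · rw [dPInt, if_neg (by simpa using h), if_neg (by omega)]

end dPInt

lemma pow_eq_inv_pow_of_pow_add_eq_one {G : Type*} [DivisionMonoid G] {ζ : G} {a b : ℕ}
    (h : ζ ^ (a + b) = 1) : ζ ^ a = ζ⁻¹ ^ b := by
  rw [inv_pow]
  exact eq_inv_of_mul_eq_one_left (by rwa [← pow_add])

lemma mul_sum_range_shift {R : Type*} [CommRing R] {N : ℕ} {ζ : R} (hζ : ζ ^ N = 1)
    {f : ℤ → R} (hf : Function.Periodic f N) :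
    ζ * ∑ k ∈ range N, f (k + 1) * ζ ^ k = ∑ k ∈ range N, f k * ζ ^ k := by
  have h := (sum_range_succ' (fun k : ℕ ↦ f k * ζ ^ k) N).symm.trans (sum_range_succ _ N)
  rw [hζ, hf.eq] at h
  simp only [Nat.cast_zero, pow_zero, Nat.cast_succ] at h
  rw [mul_sum, ← add_right_cancel h]
  exact sum_congr rfl fun k _ ↦ by ring

lemma sum_range_two_mul_eq_sum_Icc {K : Type*} [Field K] {p : ℕ} {ζ : K}
    (hζ : ζ ^ (2 * p) = 1) {f : ℤ → ℤ} (hodd : Function.Odd f)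
    (hper : Function.Periodic f (2 * p)) :
    ∑ k ∈ range (2 * p), (f k : K) * ζ ^ k =
      ∑ k ∈ Icc 1 (p - 1), (f k : K) * (ζ ^ k - ζ⁻¹ ^ k) := by
  obtain _ | m := p
  · simp
  have hf₀ : f 0 = 0 := by
    have := hodd 0
    rw [neg_zero] at this
    omega
  have hfp : f (m + 1) = 0 := by
    have := hper (-(m + 1))
    rw [hodd, show -((m : ℤ) + 1) + 2 * ((m + 1 : ℕ) : ℤ) = m + 1 by push_cast; ring] at this
    omega
  have hlow : ∑ k ∈ range (m + 1), (f k : K) * ζ ^ k =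
      ∑ k ∈ range m, (f (k + 1) : K) * ζ ^ (k + 1) := by
    simp [sum_range_succ', hf₀]
  have hhigh : ∑ k ∈ range (m + 1), (f (m + 1 + k : ℕ) : K) * ζ ^ (m + 1 + k) =
      -∑ k ∈ range m, (f (k + 1) : K) * ζ⁻¹ ^ (k + 1) := by
    have hterm : ∀ j ∈ range (m + 1), (f (m + 1 + (m + 1 - 1 - j) : ℕ) : K) *
        ζ ^ (m + 1 + (m + 1 - 1 - j)) = -((f (j + 1) : K) * ζ⁻¹ ^ (j + 1)) := fun j hj ↦ by
      have hj := mem_range.1 hj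
      have hpow : ζ ^ (m + 1 + (m + 1 - 1 - j)) = ζ⁻¹ ^ (j + 1) :=
        pow_eq_inv_pow_of_pow_add_eq_one (by rwa [show m + 1 + (m + 1 - 1 - j) + (j + 1) =
          2 * (m + 1) by omega])
      have hidx :
          ((m + 1 + (m + 1 - 1 - j) : ℕ) : ℤ) = -(j + 1) + 2 * ((m + 1 : ℕ) : ℤ) := by
        push_cast
        omega
      rw [hpow, hidx, hper, hodd, Int.cast_neg, neg_mul]
    rw [← sum_range_reflect, sum_congr rfl hterm, sum_neg_distrib, sum_range_succ]
    simp [hfp]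
  rw [two_mul, sum_range_add, hlow, hhigh, Nat.add_sub_cancel, ← Ico_add_one_right_eq_Icc,
    sum_Ico_eq_sum_range, Nat.add_sub_cancel, ← sub_eq_add_neg, ← sum_sub_distrib]
  exact sum_congr rfl fun k _ ↦ by rw [add_comm 1 k, Nat.cast_succ, mul_sub]

lemma add_inv_pow_mul_sub_inv_eq_sum_dPInt {K : Type*} [Field K] {p : ℕ} (hp : 2 ≤ p) {ζ : K}
    (hζ : ζ ^ (2 * p) = 1) (n : ℕ) :
    (ζ + ζ⁻¹) ^ n * (ζ - ζ⁻¹) = ∑ k ∈ range (2 * p), (dPInt p n k : K) * ζ ^ k := by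
  have hper (m : ℕ) : Function.Periodic (fun k : ℤ ↦ (dPInt p m k : K)) (2 * p : ℕ) :=
    fun k ↦ congrArg Int.cast (by push_cast; exact dPInt_periodic m k)
  induction n with
  | zero =>
    rw [pow_zero, one_mul, sum_range_two_mul_eq_sum_Icc hζ (dPInt_odd 0) (dPInt_periodic 0),
      sum_eq_single_of_mem 1 (by simp; omega) fun k hk hne ↦ ?_]
    · rw [Nat.cast_one, dPInt_zero_left le_rfl (by omega), if_pos rfl]
      simp
    · rw [mem_Icc] at hk
      rw [dPInt_zero_left (by omega) (by omega), if_neg (by omega), Int.cast_zero, zero_mul]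
  | succ n ih =>
    have hup : ζ * ∑ k ∈ range (2 * p), (dPInt p n k : K) * ζ ^ k =
        ∑ k ∈ range (2 * p), (dPInt p n (k - 1) : K) * ζ ^ k := by
      simpa using mul_sum_range_shift hζ ((hper n).sub_const 1)
    have hdown : ζ⁻¹ * ∑ k ∈ range (2 * p), (dPInt p n k : K) * ζ ^ k =
        ∑ k ∈ range (2 * p), (dPInt p n (k + 1) : K) * ζ ^ k := by
      have hζ₀ : ζ ≠ 0 := ne_zero_pow (by omega) (hζ ▸ one_ne_zero)
      rw [← mul_sum_range_shift hζ (hper n), inv_mul_cancel_left₀ hζ₀]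
    rw [pow_succ', mul_assoc, ih, add_mul, hup, hdown, ← sum_add_distrib]
    refine sum_congr rfl fun k _ ↦ ?_
    rw [dPInt_succ (by omega), Int.cast_add, add_mul]

theorem cyclotomic_dP_identity_general (p : ℕ) (hp : p.Prime)
    (ζ : CyclotomicField p ℚ) (hζ : IsPrimitiveRoot ζ p) (n : ℕ) :
    (ζ + ζ⁻¹) ^ n * (ζ - ζ⁻¹) =
      ∑ k ∈ Finset.Icc 1 (p - 1),
        (dP p n k : CyclotomicField p ℚ) * (ζ ^ k - ζ⁻¹ ^ k) := by
  have hζ₂ : ζ ^ (2 * p) = 1 := by rw [pow_mul', hζ.pow_eq_one, one_pow]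
  rw [add_inv_pow_mul_sub_inv_eq_sum_dPInt hp.two_le hζ₂,
    sum_range_two_mul_eq_sum_Icc hζ₂ (dPInt_odd n) (dPInt_periodic n)]
  simp only [dP_eq_dPInt]

/-- For an odd prime `p`, a primitive `p`-th root of unity `ζ` in the `p`-th cyclotomic
field `ℚ(ζ_p)`, and every `n : ℕ`:
`(ζ + ζ⁻¹)^n (ζ - ζ⁻¹) = ∑_{k=1}^{p-1} d_p(n,k) (ζ^k - ζ^{-k})`. -/
theorem cyclotomic_dP_identity (p : ℕ) (hp : p.Prime) (hodd : Odd p)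
    (ζ : CyclotomicField p ℚ) (hζ : IsPrimitiveRoot ζ p) (n : ℕ) :
    (ζ + ζ⁻¹) ^ n * (ζ - ζ⁻¹) =
      ∑ k ∈ Finset.Icc 1 (p - 1),
        (dP p n k : CyclotomicField p ℚ) * (ζ ^ k - ζ⁻¹ ^ k) :=
  cyclotomic_dP_identity_general p hp ζ hζ n
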